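/- arXiv:nlin/0005041 — 3 statements merged into one kernel-verified Lean document; each statement's English description precedes it below -/
import Mathlib

section
/- Let T > 0 with sin T ≠ 0, let x : ℝ → ℝ be continuous and T-periodic, and let χ : ℝ → ℝ be a twice continuously differentiable, even, T-periodic function satisfying χ''(t) + χ(t) = x(t) for all t ∈ ℝ. Then χ(0) = (1 / sin T) · ∫₀ᵀ cos(T − t)·x(t) dt. -/
open Real

/-!
Variation of constants: `g t = cos (T - t) χ'(t) - sin (T - t) χ(t)` has derivative
`cos (T - t) (χ'' + χ)(t) = cos (T - t) x(t)`, so the integral equals `g T - g 0`.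
Evenness gives `χ'(0) = 0` and periodicity `χ'(T) = χ'(0) = 0`, so `g T - g 0 = sin T · χ(0)`.
-/

section DerivSymmetry

variable {F : Type*} [NormedAddCommGroup F] [NormedSpace ℝ F] {f : ℝ → F}

lemma deriv_zero_of_even (hf : ∀ t, f (-t) = f t) : deriv f 0 = 0 := by
  have : IsAddTorsionFree F := .of_isTorsionFree ℝ F
  have h : deriv f 0 = -deriv f 0 := by simpa only [hf, neg_zero] using deriv_comp_neg f 0
  exact self_eq_neg.mp h

lemma deriv_add_period {T : ℝ} (hf : ∀ t, f (t + T) = f t) (t : ℝ) :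
    deriv f (t + T) = deriv f t := by
  simpa only [hf] using (deriv_comp_add_const f T t).symm

end DerivSymmetry

lemma hasDerivAt_cos_sub_mul_deriv_sub_sin_sub_mul {f : ℝ → ℝ} {b t : ℝ}
    (hf : DifferentiableAt ℝ f t) (hf' : DifferentiableAt ℝ (deriv f) t) :
    HasDerivAt (fun s ↦ cos (b - s) * deriv f s - sin (b - s) * f s)
      (cos (b - t) * (deriv (deriv f) t + f t)) t := by
  have hcos : HasDerivAt (fun s ↦ cos (b - s)) (sin (b - t)) t := by
    simpa using (hasDerivAt_cos (b - t)).comp_const_sub b t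
  have hsin : HasDerivAt (fun s ↦ sin (b - s)) (-cos (b - t)) t :=
    (hasDerivAt_sin (b - t)).comp_const_sub b t
  exact ((hcos.fun_mul hf'.hasDerivAt).fun_sub (hsin.fun_mul hf.hasDerivAt)).congr_deriv (by ring)

lemma integral_cos_sub_mul_deriv_deriv_add {f : ℝ → ℝ} (hf : ContDiff ℝ 2 f) (a b : ℝ) :
    ∫ t in a..b, cos (b - t) * (deriv (deriv f) t + f t) =
      deriv f b - cos (b - a) * deriv f a + sin (b - a) * f a := by
  obtain ⟨hf₁, -, hf'⟩ := contDiff_succ_iff_deriv (n := 1).mp hf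
  have hcont : Continuous fun t ↦ cos (b - t) * (deriv (deriv f) t + f t) := by
    have hf'' := hf'.continuous_deriv le_rfl
    fun_prop
  rw [intervalIntegral.integral_eq_sub_of_hasDerivAt
    (fun t _ ↦ hasDerivAt_cos_sub_mul_deriv_sub_sin_sub_mul (hf₁ t)
      (hf'.differentiable one_ne_zero t)) (hcont.intervalIntegrable a b)]
  simp only [sub_self, cos_zero, sin_zero]
  ring

theorem even_periodic_solution_initial_value_general
    (T : ℝ) (hsin : Real.sin T ≠ 0)
    (x : ℝ → ℝ)
    (χ : ℝ → ℝ) (hχ : ContDiff ℝ 2 χ)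
    (hχeven : ∀ t : ℝ, χ (-t) = χ t)
    (hχper : ∀ t : ℝ, χ (t + T) = χ t)
    (hode : ∀ t : ℝ, deriv (deriv χ) t + χ t = x t) :
    χ 0 = (1 / Real.sin T) * ∫ t in (0:ℝ)..T, Real.cos (T - t) * x t := by
  have hχ'0 : deriv χ 0 = 0 := deriv_zero_of_even hχeven
  have hχ'T : deriv χ T = 0 := by
    simpa only [zero_add, hχ'0] using deriv_add_period hχper 0
  simp_rw [← hode]
  rw [integral_cos_sub_mul_deriv_deriv_add hχ 0 T, hχ'0, hχ'T, sub_zero]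
  field_simp
  ring

/-- The initial value of an even `T`-periodic solution of `χ'' + χ = x` is given by
`χ(0) = (1 / sin T) ∫₀ᵀ cos(T − t) x(t) dt` when `sin T ≠ 0`. -/
theorem even_periodic_solution_initial_value
    (T : ℝ) (hT : 0 < T) (hsin : Real.sin T ≠ 0)
    (x : ℝ → ℝ) (hx : Continuous x) (hxper : ∀ t : ℝ, x (t + T) = x t)
    (χ : ℝ → ℝ) (hχ : ContDiff ℝ 2 χ)
    (hχeven : ∀ t : ℝ, χ (-t) = χ t)
    (hχper : ∀ t : ℝ, χ (t + T) = χ t)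
    (hode : ∀ t : ℝ, deriv (deriv χ) t + χ t = x t) :
    χ 0 = (1 / Real.sin T) * ∫ t in (0:ℝ)..T, Real.cos (T - t) * x t :=
  even_periodic_solution_initial_value_general T hsin x χ hχ hχeven hχper hode
end

section
/- Let n be a nonnegative integer, set P = (2n + 1)π, and let x : ℝ → ℝ be continuous, even, and P-periodic. Then ∫₀ᴾ cos(t)·x(t) dt = 0. -/
open Real

/-- For an even, `(2n+1)π`-periodic continuous function `x`, the resonant Fourier
integral `∫₀ᴾ cos t · x(t) dt` vanishes, where `P = (2n+1)π`. -/
theorem fourier_integral_vanishes_at_odd_multiples_of_pi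
    (n : ℕ) (P : ℝ) (hP : P = (2 * n + 1) * π)
    (x : ℝ → ℝ) (hx : Continuous x)
    (hxeven : ∀ t : ℝ, x (-t) = x t)
    (hxper : ∀ t : ℝ, x (t + P) = x t) :
    ∫ t in (0:ℝ)..P, Real.cos t * x t = 0 := by
  have hc : Real.cos P = -1 := by
    have : P = (n : ℝ) * (2 * π) + π := by rw [hP]; ring
    rw [this, Real.cos_add, Real.cos_nat_mul_two_pi, Real.cos_pi, Real.sin_pi]
    ring
  have hs : Real.sin P = 0 := by
    have : P = (n : ℝ) * (2 * π) + π := by rw [hP]; ring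
    rw [this, Real.sin_add, Real.cos_nat_mul_two_pi, Real.cos_pi, Real.sin_pi,
      show (n:ℝ)*(2*π) = ((2*n : ℤ):ℝ)*π by push_cast; ring, Real.sin_int_mul_pi]
    ring
  have key : ∀ t : ℝ, Real.cos (P - t) * x (P - t) = -(Real.cos t * x t) := by
    intro t
    have hx1 : x (P - t) = x t := by
      have := hxper (-t)
      rw [hxeven] at this
      rw [show P - t = -t + P by ring, this]
    rw [hx1, Real.cos_sub, hc, hs]
    ring
  have h1 : (∫ t in (0:ℝ)..P, Real.cos (P - t) * x (P - t))
      = ∫ t in (0:ℝ)..P, Real.cos t * x t := by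
    have := intervalIntegral.integral_comp_sub_left
      (a := (0:ℝ)) (b := P) (fun t => Real.cos t * x t) P
    simpa using this
  have h2 : (∫ t in (0:ℝ)..P, Real.cos (P - t) * x (P - t))
      = -∫ t in (0:ℝ)..P, Real.cos t * x t := by
    simp_rw [key]
    exact intervalIntegral.integral_neg
  have := h1.symm.trans h2
  linarith
end

section
/- Let n be a positive integer and let J be an open interval containing 2nπ. Let X : J × ℝ → ℝ be continuous, with X(T, ·) T-periodic for each T ∈ J, and suppose ∫₀^{2nπ} cos(t)·X(2nπ, t) dt ≠ 0. Then the absolute value of χ₁(T) := (1/sin T)·∫₀ᵀ cos(T − t)·X(T, t) dt tends to +∞ as T → 2nπ with T ∈ J, T ≠ 2nπ and sin T ≠ 0. -/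
open Real Filter

/-- If the resonant Fourier integral `∫₀^{2nπ} cos t · X(2nπ, t) dt` does not vanish,
then `|χ₁(T)| = |(1/sin T) ∫₀ᵀ cos(T−t) X(T,t) dt|` tends to `+∞` as `T → 2nπ`. -/
theorem vertical_asymptote_at_resonance
    (n : ℕ) (hn : 0 < n)
    (a b : ℝ) (hab : a < 2 * n * π ∧ 2 * n * π < b)
    (X : ℝ → ℝ → ℝ)
    (hX : ContinuousOn (fun p : ℝ × ℝ => X p.1 p.2) (Set.Ioo a b ×ˢ Set.univ))
    (hXper : ∀ T ∈ Set.Ioo a b, ∀ t : ℝ, X T (t + T) = X T t)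
    (hres : (∫ t in (0:ℝ)..(2 * n * π), Real.cos t * X (2 * n * π) t) ≠ 0) :
    Filter.Tendsto
      (fun T : ℝ => |(1 / Real.sin T) * ∫ t in (0:ℝ)..T, Real.cos (T - t) * X T t|)
      (nhdsWithin (2 * n * π)
        {T : ℝ | T ∈ Set.Ioo a b ∧ T ≠ 2 * n * π ∧ Real.sin T ≠ 0})
      Filter.atTop := by
  obtain ⟨ha, hb⟩ := hab
  set c : ℝ := 2 * n * π with hc
  set a' : ℝ := (a + c) / 2 with ha'def
  set b' : ℝ := (c + b) / 2 with hb'def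
  have haa' : a < a' := by simp only [ha'def]; linarith
  have ha'c : a' < c := by simp only [ha'def]; linarith
  have hcb' : c < b' := by simp only [hb'def]; linarith
  have hb'b : b' < b := by simp only [hb'def]; linarith
  set proj : ℝ → ℝ := fun T => max a' (min b' T) with hproj
  have hprojc : Continuous proj := continuous_const.max (continuous_const.min continuous_id)
  have hprojmem : ∀ T : ℝ, proj T ∈ Set.Ioo a b := by
    intro T
    constructor
    · exact lt_of_lt_of_le haa' (le_max_left _ _)
    · have h1 : min b' T ≤ b' := min_le_left _ _
      have := max_le (le_of_lt (lt_trans ha'c (lt_trans hcb' hb'b))) (le_trans h1 (le_of_lt hb'b))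
      exact lt_of_le_of_lt (max_le (le_of_lt (lt_trans ha'c hcb')) h1) hb'b
  have hprojeq : ∀ T ∈ Set.Ioo a' b', proj T = T := by
    intro T hT
    simp only [hproj]
    rw [min_eq_right (le_of_lt hT.2), max_eq_right (le_of_lt hT.1)]
  -- continuous extension of X
  have hYc : Continuous (fun p : ℝ × ℝ => X (proj p.1) p.2) := by
    have : Continuous (fun p : ℝ × ℝ => (proj p.1, p.2)) :=
      (hprojc.comp continuous_fst).prodMk continuous_snd
    exact hX.comp_continuous this (fun p => ⟨hprojmem p.1, Set.mem_univ _⟩)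
  set g : ℝ → ℝ := fun T => ∫ t in (0:ℝ)..T, Real.cos (T - t) * X (proj T) t with hg
  have hgc : Continuous g := by
    apply intervalIntegral.continuous_parametric_intervalIntegral_of_continuous
      (f := fun T t => Real.cos (T - t) * X (proj T) t) (μ := MeasureTheory.volume)
      _ continuous_id
    exact ((Real.continuous_cos.comp (continuous_fst.sub continuous_snd)).mul hYc)
  have hsinc : Real.sin c = 0 := by
    have : c = (2 * n : ℕ) * π := by push_cast [hc]; ring
    rw [this]
    exact Real.sin_nat_mul_pi _
  have hcosc : Real.cos c = 1 := by
    have : c = (n : ℕ) * (2 * π) := by push_cast [hc]; ring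
    rw [this]
    exact Real.cos_nat_mul_two_pi _
  have hgcval : g c = ∫ t in (0:ℝ)..c, Real.cos t * X c t := by
    rw [hg]
    simp only [hprojeq c ⟨ha'c, hcb'⟩]
    apply intervalIntegral.integral_congr
    intro t _
    simp [Real.cos_sub, hsinc, hcosc]
  have hgcne : g c ≠ 0 := by rw [hgcval]; exact hres
  set l := nhdsWithin c {T : ℝ | T ∈ Set.Ioo a b ∧ T ≠ c ∧ Real.sin T ≠ 0} with hl
  have hmem_l : ∀ᶠ T in l, T ∈ Set.Ioo a' b' := by
    apply eventually_nhdsWithin_of_eventually_nhds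
    exact (isOpen_Ioo.eventually_mem ⟨ha'c, hcb'⟩)
  have hS : ∀ᶠ T in l, Real.sin T ≠ 0 :=
    eventually_mem_nhdsWithin.mono (fun T hT => hT.2.2)
  -- |g T| tends to |g c| > 0
  have htg : Tendsto (fun T => |g T|) l (nhds |g c|) :=
    ((hgc.abs.tendsto c).mono_left nhdsWithin_le_nhds)
  -- |sin T|⁻¹ tends to atTop
  have hsin0 : Tendsto (fun T => |Real.sin T|) l (nhdsWithin 0 (Set.Ioi 0)) := by
    rw [tendsto_nhdsWithin_iff]
    constructor
    · have : Tendsto (fun T => |Real.sin T|) l (nhds |Real.sin c|) :=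
        (Real.continuous_sin.abs.tendsto c).mono_left nhdsWithin_le_nhds
      rwa [hsinc, abs_zero] at this
    · exact hS.mono (fun T hT => abs_pos.mpr hT)
  have hinv : Tendsto (fun T => |Real.sin T|⁻¹) l atTop := hsin0.inv_tendsto_nhdsGT_zero
  have hmain : Tendsto (fun T => |g T| * |Real.sin T|⁻¹) l atTop :=
    Tendsto.pos_mul_atTop (abs_pos.mpr hgcne) htg hinv
  apply hmain.congr'
  filter_upwards [hmem_l] with T hT
  rw [hg]
  simp only [hprojeq T hT]
  rw [abs_mul, abs_one_div, one_div, mul_comm]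
end
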